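/- For every natural number t and every prime p ≥ 23, neither the p-th cyclotomic polynomial Φ_p(x) nor the 2p-th cyclotomic polynomial Φ_{2p}(x) divides R_t(x) in ℤ[x]. -/

import Mathlib

/-!
Suppose `Φ_m ∣ R_t` with `m = p` or `m = 2p`. Modulo `p` we have `Φ_p ≡ (X - 1)^(p-1)` and
`Φ_{2p} ≡ (X + 1)^(p-1)`, so `R_t` acquires a root of multiplicity at least `p - 1 ≥ 22` at
`a = 1` (resp. `a = -1`) over `𝔽_p`, and `p` divides `R_t^{(k)}(a)` for every `k ≤ 6`. These
derivatives are explicit polynomials in `t`, and eliminating `t` between three of them shows that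
`p` divides `2^10 · 3` (resp. `2^8`), which is impossible for `p ≥ 23`.
-/

open Polynomial

noncomputable def Rpoly (t : ℕ) : Polynomial ℤ :=
  X ^ (8 * t + 15) + X ^ (8 * t + 14) + X ^ (8 * t + 11) - X ^ (8 * t + 10) - X ^ (8 * t + 8)
    + 2 * X ^ (6 * t + 9) - X ^ (4 * t + 15) - X ^ (4 * t + 11) - X ^ (4 * t + 9)
    + 2 * X ^ (4 * t + 8) - 2 * X ^ (4 * t + 7) + X ^ (4 * t + 6) + X ^ (4 * t + 4)
    + X ^ (4 * t) - 2 * X ^ (2 * t + 6) + X ^ 7 + X ^ 5 - X ^ 4 - X - 1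

theorem Nat.Prime.le_three_of_dvd_two_pow_mul_three_pow {p a b : ℕ} (hp : p.Prime)
    (h : p ∣ 2 ^ a * 3 ^ b) : p ≤ 3 := by
  rcases hp.dvd_mul.mp h with h | h
  · exact (Nat.le_of_dvd two_pos (hp.dvd_of_dvd_pow h)).trans (by norm_num)
  · exact Nat.le_of_dvd three_pos (hp.dvd_of_dvd_pow h)

theorem Nat.cast_descFactorial_succ {S : Type*} [Ring S] (n k : ℕ) :
    (n.descFactorial (k + 1) : S) = n.descFactorial k * (n - k) := by
  rw [← descPochhammer_eval_eq_descFactorial, descPochhammer_succ_eval,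
    descPochhammer_eval_eq_descFactorial]

namespace Polynomial

variable {R : Type*} [CommRing R]

theorem eval_iterate_derivative_eq_zero_of_pow_dvd {f : R[X]} {a : R} {m k : ℕ}
    (h : (X - C a) ^ m ∣ f) (hk : k < m) : (derivative^[k] f).eval a = 0 :=
  dvd_iff_isRoot.mp <| (dvd_pow_self _ (Nat.sub_ne_zero_of_lt hk)).trans
    (pow_sub_dvd_iterate_derivative_of_pow_dvd k h)

theorem eval_one_iterate_derivative_X_pow (k n : ℕ) :
    (derivative^[k] (X ^ n : R[X])).eval 1 = n.descFactorial k := by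
  simp [iterate_derivative_X_pow_eq_natCast_mul]

theorem eval_neg_one_iterate_derivative_X_pow (k n : ℕ) :
    (derivative^[k] (X ^ n : R[X])).eval (-1) = (-1) ^ (n + k) * n.descFactorial k := by
  rw [iterate_derivative_X_pow_eq_natCast_mul, eval_mul, eval_natCast, eval_pow, eval_X]
  rcases le_or_gt k n with h | h
  · obtain ⟨m, rfl⟩ := Nat.exists_eq_add_of_le h
    rw [Nat.add_sub_cancel_left, mul_comm, show k + m + k = m + 2 * k by ring, pow_add, pow_mul]
    simp
  · simp [Nat.descFactorial_eq_zero_iff_lt.mpr h]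

/-- Modulo `p`, `Φ_{np} = Φ_n ^ (p - 1) = (X - a) ^ (p - 1)`. -/
theorem prime_dvd_eval_iterate_derivative_of_cyclotomic_mul_dvd {p n : ℕ} [Fact p.Prime]
    (hpn : ¬ p ∣ n) {a : ℤ} (ha : cyclotomic n ℤ = X - C a) {f : ℤ[X]}
    (hf : cyclotomic (n * p) ℤ ∣ f) {k : ℕ} (hk : k + 1 < p) :
    (p : ℤ) ∣ (derivative^[k] f).eval a := by
  have hpow : (X - C (a : ZMod p)) ^ (p - 1) ∣ f.map (Int.castRingHom (ZMod p)) := by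
    have := map_dvd (Int.castRingHom (ZMod p)) hf
    rwa [map_cyclotomic_int, cyclotomic_mul_prime_eq_pow_of_not_dvd _ hpn,
      ← map_cyclotomic_int, ha, Polynomial.map_sub, map_X, map_C, eq_intCast] at this
  rw [← ZMod.intCast_zmod_eq_zero_iff_dvd, ← eq_intCast (Int.castRingHom (ZMod p)), ← eval₂_hom,
    ← eval_map, ← iterate_derivative_map]
  exact eval_iterate_derivative_eq_zero_of_pow_dvd hpow (by omega)

end Polynomial

-- `X` and `1` appear as `X ^ 1` and `X ^ 0` so that every term is a multiple of some `X ^ n`.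
theorem Rpoly_eq_sum_X_pow (t : ℕ) : Rpoly t =
    X ^ (8 * t + 15) + X ^ (8 * t + 14) + X ^ (8 * t + 11) - X ^ (8 * t + 10) - X ^ (8 * t + 8)
      + 2 • X ^ (6 * t + 9) - X ^ (4 * t + 15) - X ^ (4 * t + 11) - X ^ (4 * t + 9)
      + 2 • X ^ (4 * t + 8) - 2 • X ^ (4 * t + 7) + X ^ (4 * t + 6) + X ^ (4 * t + 4)
      + X ^ (4 * t) - 2 • X ^ (2 * t + 6) + X ^ 7 + X ^ 5 - X ^ 4 - X ^ 1 - X ^ 0 := by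
  simp only [Rpoly, nsmul_eq_mul, Nat.cast_ofNat, pow_one, pow_zero]

section Derivatives

variable (t : ℕ)

theorem eval_one_iterate_derivative_Rpoly :
    (derivative^[1] (Rpoly t)).eval 1 = 16 * (t : ℤ) + 12 ∧
    (derivative^[3] (Rpoly t)).eval 1 = 928 * (t : ℤ) ^ 3 + 4536 * t ^ 2 + 6440 * t + 2034 ∧
    (derivative^[5] (Rpoly t)).eval 1 = 48256 * (t : ℤ) ^ 5 + 470240 * t ^ 4 + 1547840 * t ^ 3
      + 2250040 * t ^ 2 + 1411824 * t + 228720 := by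
  refine ⟨?_, ?_, ?_⟩ <;>
  · simp only [Rpoly_eq_sum_X_pow, iterate_map_add, iterate_map_sub, iterate_map_nsmul,
      eval_add, eval_sub, eval_smul, eval_one_iterate_derivative_X_pow, Nat.cast_descFactorial_succ,
      Nat.descFactorial_zero]
    push_cast
    ring

theorem eval_neg_one_iterate_derivative_Rpoly :
    (derivative^[2] (Rpoly t)).eval (-1) = -112 * (t : ℤ) ^ 2 - 144 * t + 68 ∧
    (derivative^[4] (Rpoly t)).eval (-1) = -12352 * (t : ℤ) ^ 4 - 50112 * t ^ 3 - 65360 * t ^ 2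
      - 17856 * t + 18000 ∧
    (derivative^[6] (Rpoly t)).eval (-1) = -838912 * (t : ℤ) ^ 6 - 4724352 * t ^ 5
      - 11261440 * t ^ 4 - 14397600 * t ^ 3 - 8849488 * t ^ 2 - 241728 * t + 1974960 := by
  refine ⟨?_, ?_, ?_⟩ <;>
  · simp only [Rpoly_eq_sum_X_pow, iterate_map_add, iterate_map_sub, iterate_map_nsmul,
      eval_add, eval_sub, eval_smul, eval_neg_one_iterate_derivative_X_pow,
      Nat.cast_descFactorial_succ, Nat.descFactorial_zero]
    norm_num [pow_add, pow_mul]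
    ring

variable {t}

-- The multipliers below are Bézout cofactors over `ℚ[t]`, cleared of denominators.
theorem dvd_of_forall_dvd_eval_one_iterate_derivative_Rpoly {q : ℤ}
    (h : ∀ k ≤ 5, q ∣ (derivative^[k] (Rpoly t)).eval 1) : q ∣ 2 ^ 10 * 3 := by
  obtain ⟨e1, e3, e5⟩ := eval_one_iterate_derivative_Rpoly t
  have h1 := e1 ▸ h 1 (by norm_num)
  have h3 := e3 ▸ h 3 (by norm_num)
  have h5 := e5 ▸ h 5 (by norm_num)
  have d3 : q ∣ 162816 := by
    have := dvd_sub (h1.mul_left (14848 * (t : ℤ) ^ 2 + 61440 * t + 56960)) (h3.mul_left 256)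
    ring_nf at this
    exact this
  have d5 : q ∣ 328335360 := by
    have := dvd_sub (h1.mul_left (12353536 * (t : ℤ) ^ 4 + 111116288 * t ^ 3 + 312909824 * t ^ 2
      + 341327872 * t + 105431040)) (h5.mul_left 4096)
    ring_nf at this
    exact this
  have := dvd_gcd d3 d5
  norm_num at this ⊢
  exact this

theorem dvd_of_forall_dvd_eval_neg_one_iterate_derivative_Rpoly {q : ℤ}
    (h : ∀ k ≤ 6, q ∣ (derivative^[k] (Rpoly t)).eval (-1)) : q ∣ 2 ^ 8 := by
  obtain ⟨e2, e4, e6⟩ := eval_neg_one_iterate_derivative_Rpoly t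
  have h2 := e2 ▸ h 2 (by norm_num)
  have h4 := e4 ▸ h 4 (by norm_num)
  have h6 := e6 ▸ h 6 (by norm_num)
  have d4 : q ∣ 9564416 := by
    have := dvd_add (h2.mul_left (6406056 * (t : ℤ) ^ 3 + 27995764 * t ^ 2 + 43347096 * t
      + 24725212)) (h4.mul_left (-58086 * t - 92875))
    ring_nf at this
    exact this
  have d6 : q ∣ 12823279571200 := by
    have := dvd_add (h2.mul_left (324666808800 * (t : ℤ) ^ 5 + 1661578704992 * t ^ 4
      + 3830565425328 * t ^ 3 + 5020352054292 * t ^ 2 + 3597319904088 * t + 1160428359140))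
      (h6.mul_left (-43345050 * t - 33461867))
    ring_nf at this
    exact this
  have := dvd_gcd d4 d6
  norm_num at this ⊢
  exact this

end Derivatives

/-- For every natural number `t` and every prime `p ≥ 23`, neither the `p`-th nor the
`2p`-th cyclotomic polynomial divides `R_t(x)` in `ℤ[x]`. -/
theorem cyclotomic_prime_not_dvd_R (t p : ℕ) (hp : p.Prime) (hp23 : 23 ≤ p) :
    ¬ Polynomial.cyclotomic p ℤ ∣ Rpoly t ∧ ¬ Polynomial.cyclotomic (2 * p) ℤ ∣ Rpoly t := by
  have : Fact p.Prime := ⟨hp⟩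
  constructor
  · intro hdvd
    have h := dvd_of_forall_dvd_eval_one_iterate_derivative_Rpoly fun k hk =>
      prime_dvd_eval_iterate_derivative_of_cyclotomic_mul_dvd (n := 1) hp.not_dvd_one
        (by rw [cyclotomic_one, map_one]) (by rwa [one_mul]) (by omega)
    have := hp.le_three_of_dvd_two_pow_mul_three_pow (a := 10) (b := 1) (by exact_mod_cast h)
    omega
  · intro hdvd
    have hp2 : ¬ p ∣ 2 := fun h => by have := Nat.le_of_dvd two_pos h; omega
    have h := dvd_of_forall_dvd_eval_neg_one_iterate_derivative_Rpoly fun k hk =>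
      prime_dvd_eval_iterate_derivative_of_cyclotomic_mul_dvd (n := 2) hp2
        (by rw [cyclotomic_two, map_neg, map_one, sub_neg_eq_add])
        (by rwa [mul_comm] at hdvd) (by omega)
    have := hp.le_three_of_dvd_two_pow_mul_three_pow (a := 8) (b := 0) (by exact_mod_cast h)
    omega
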